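/- arXiv:1211.1999 — 3 statements merged into one kernel-verified Lean document; each statement's English description precedes it below -/
import Mathlib

section
/- Let G be a minimal counterexample to Ohba's Conjecture (a complete k-partite graph on at most 2k+1 vertices with χ_ℓ(G) > k such that all graphs on fewer vertices satisfy Ohba's Conjecture) and L a list assignment with |L(v)| ≥ k for all v for which G is not L-colourable. Then for every part P of G with |P| ≥ 2, the intersection ⋂_{v∈P} L(v) is empty. -/
/-!
If every list of a part `P` with `|P| ≥ 2` contained a colour `c`, colour all of `P` with `c`
and delete `c` from the remaining lists. The graph `G - P` is complete `(k - 1)`-partite on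
at most `2(k - 1) + 1` vertices with lists of size at least `k - 1`, so by minimality it is
colourable from the reduced lists; since `P` is stable and `c` is used nowhere else, the two
colourings combine to an `L`-colouring of `G`.
-/

/-- `f` is an acceptable colouring for the list assignment `L` on `G`:
it is proper and each vertex gets a colour from its list. -/
def IsListColoring {V : Type} (G : SimpleGraph V) (L : V → Finset ℕ) (f : V → ℕ) : Prop :=
  (∀ v, f v ∈ L v) ∧ ∀ ⦃u w : V⦄, G.Adj u w → f u ≠ f w

/-- `G` is `L`-colourable. -/
def ListColorable {V : Type} (G : SimpleGraph V) (L : V → Finset ℕ) : Prop :=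
  ∃ f, IsListColoring G L f

/-- `G` is `k`-choosable: `L`-colourable whenever every list has size at least `k`. -/
def Choosable {V : Type} (G : SimpleGraph V) (k : ℕ) : Prop :=
  ∀ L : V → Finset ℕ, (∀ v, k ≤ (L v).card) → ListColorable G L

/-- The list chromatic number of `G`. -/
noncomputable def listChromaticNumber {V : Type} (G : SimpleGraph V) : ℕ :=
  sInf {k | Choosable G k}

open Finset
open scoped Classical

/-- The set `C` of all colours appearing in some list. -/
noncomputable def colorSet {V : Type} [Fintype V] (L : V → Finset ℕ) : Finset ℕ :=
  Finset.univ.biUnion L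

/-- `N_B(c)`: the set of vertices whose list contains the colour `c`. -/
noncomputable def NB {V : Type} [Fintype V] (L : V → Finset ℕ) (c : ℕ) : Finset V :=
  Finset.univ.filter (fun v => c ∈ L v)

/-- `γ = |V(G)| - |C|`. -/
noncomputable def gam (V : Type) [Fintype V] (L : V → Finset ℕ) : ℕ :=
  Fintype.card V - (colorSet L).card

/-- The part (maximal stable set) of the complete multipartite graph with index `i`. -/
noncomputable def part {V : Type} [Fintype V] {k : ℕ} (p : V → Fin k) (i : Fin k) : Finset V :=
  Finset.univ.filter (fun v => p v = i)

/-- `v` is a singleton: the part containing `v` has exactly one element. -/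
def IsSingleton {V : Type} [Fintype V] {k : ℕ} (p : V → Fin k) (v : V) : Prop :=
  (part p (p v)).card = 1

/-- `b`: the number of non-singleton parts. -/
noncomputable def numBigParts {V : Type} [Fintype V] {k : ℕ} (p : V → Fin k) : ℕ :=
  (Finset.univ.filter (fun i : Fin k => 2 ≤ (part p i).card)).card

/-- A colour is globally frequent if it appears in the lists of at least `k+1` vertices. -/
def GloballyFrequent {V : Type} [Fintype V] (L : V → Finset ℕ) (k : ℕ) (c : ℕ) : Prop :=
  k + 1 ≤ (NB L c).card

/-- A colour is frequent among singletons if it appears in the lists of at least `γ`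
singletons. -/
def FrequentAmongSingletons {V : Type} [Fintype V] {k : ℕ} (p : V → Fin k)
    (L : V → Finset ℕ) (c : ℕ) : Prop :=
  gam V L ≤ (Finset.univ.filter (fun v => IsSingleton p v ∧ c ∈ L v)).card

/-- A colour is frequent if it is globally frequent or frequent among singletons. -/
def Frequent {V : Type} [Fintype V] {k : ℕ} (p : V → Fin k) (L : V → Finset ℕ) (c : ℕ) : Prop :=
  GloballyFrequent L k c ∨ FrequentAmongSingletons p L c

/-- A proper colouring `f : V → C` is near-acceptable for `L` if every vertex `v` satisfies
`f v ∈ L v`, or `f v` is frequent and `v` is the unique vertex coloured `f v`. -/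
def NearAcceptable {V : Type} [Fintype V] {k : ℕ} (G : SimpleGraph V) (p : V → Fin k)
    (L : V → Finset ℕ) (f : V → ℕ) : Prop :=
  (∀ v, f v ∈ colorSet L) ∧ (∀ ⦃u w : V⦄, G.Adj u w → f u ≠ f w) ∧
    ∀ v, f v ∈ L v ∨ (Frequent p L (f v) ∧ ∀ u, f u = f v → u = v)

/-- `L` is a maximal bad list assignment: adding any colour of `C` to any list makes `G`
colourable. -/
def MaximalBad {V : Type} [Fintype V] (G : SimpleGraph V) (L : V → Finset ℕ) : Prop :=
  ∀ v c, c ∈ colorSet L → c ∉ L v →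
    ListColorable G (Function.update L v (insert c (L v)))

/-- A minimal counterexample to Ohba's conjecture: `G` is a complete `k`-partite graph
(with part-indexing map `p`) on at most `2k+1` vertices, `L` is a list assignment with all
lists of size at least `k` for which `G` is not `L`-colourable (so `χ_ℓ(G) > k = χ(G)`),
and every graph on fewer vertices satisfies Ohba's conjecture. -/
structure MinCex (V : Type) [Fintype V] (G : SimpleGraph V) (k : ℕ)
    (p : V → Fin k) (L : V → Finset ℕ) : Prop where
  adj_iff : ∀ u v, G.Adj u v ↔ p u ≠ p v
  surj : Function.Surjective p
  card_le : Fintype.card V ≤ 2 * k + 1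
  lists : ∀ v, k ≤ (L v).card
  bad : ¬ ListColorable G L
  minimal : ∀ (W : Type) [Fintype W] (H : SimpleGraph W) (j : ℕ),
    Fintype.card W < Fintype.card V → H.chromaticNumber = (j : ℕ∞) →
    Fintype.card W ≤ 2 * j + 1 → listChromaticNumber H = j

open Function SimpleGraph


/-- Hall's theorem: distinct representatives of the lists form an acceptable colouring. -/
theorem choosable_card {W : Type} [Fintype W] (H : SimpleGraph W) :
    Choosable H (Fintype.card W) := by
  intro L hL
  have hHall : ∀ s : Finset W, s.card ≤ (s.biUnion L).card := by
    intro s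
    rcases s.eq_empty_or_nonempty with rfl | ⟨v, hv⟩
    · simp
    · calc s.card ≤ Fintype.card W := card_le_univ s
        _ ≤ (L v).card := hL v
        _ ≤ (s.biUnion L).card := card_le_card (subset_biUnion_of_mem L hv)
  obtain ⟨f, hf_inj, hf⟩ := (all_card_le_biUnion_card_iff_exists_injective L).mp hHall
  exact ⟨f, hf, fun _ _ hadj hfe => hadj.ne (hf_inj hfe)⟩

theorem choosable_listChromaticNumber {W : Type} [Fintype W] (H : SimpleGraph W) :
    Choosable H (listChromaticNumber H) :=
  Nat.sInf_mem (s := {k | Choosable H k}) ⟨Fintype.card W, choosable_card H⟩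

theorem chromaticNumber_eq_card_of_adj_iff {V ι : Type*} [Fintype ι] {G : SimpleGraph V}
    (p : V → ι) (hp : Surjective p) (hadj : ∀ u v, G.Adj u v ↔ p u ≠ p v) :
    G.chromaticNumber = Fintype.card ι := by
  rw [← chromaticNumber_top]
  refine le_antisymm (chromaticNumber_mono_of_hom ⟨p, fun h => (hadj _ _).1 h⟩) ?_
  refine chromaticNumber_mono_of_hom ⟨surjInv hp, fun {a b} h => (hadj _ _).2 ?_⟩
  rwa [surjInv_eq hp, surjInv_eq hp]

theorem ListColorable.of_induce_compl {V : Type} {G : SimpleGraph V} {L : V → Finset ℕ}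
    {S : Set V} (hS : G.IsIndepSet S) {c : ℕ} (hc : ∀ v ∈ S, c ∈ L v)
    (h : ListColorable (G.induce Sᶜ) (fun v => (L v).erase c)) : ListColorable G L := by
  obtain ⟨f, hf_mem, hf_adj⟩ := h
  refine ⟨fun v => if hv : v ∈ S then c else f ⟨v, hv⟩, fun v => ?_, fun u v huv => ?_⟩
  · by_cases hv : v ∈ S
    · simpa [hv] using hc v hv
    · simpa [hv] using mem_of_mem_erase (hf_mem ⟨v, hv⟩)
  · by_cases hu : u ∈ S <;> by_cases hv : v ∈ S <;> simp only [hu, hv, dif_pos]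
    · exact absurd huv (hS hu hv huv.ne)
    · exact (ne_of_mem_erase (hf_mem ⟨v, hv⟩)).symm
    · exact ne_of_mem_erase (hf_mem ⟨u, hu⟩)
    · exact hf_adj (SimpleGraph.induce_adj.2 huv : (G.induce Sᶜ).Adj ⟨u, hu⟩ ⟨v, hv⟩)

namespace MinCex

variable {V : Type} [Fintype V] {G : SimpleGraph V} {k : ℕ} {p : V → Fin k}
  {L : V → Finset ℕ}

theorem isIndepSet_part (h : MinCex V G k p L) (i : Fin k) : G.IsIndepSet (part p i : Set V) := by
  intro u hu v hv _ huv
  simp only [part, coe_filter, mem_univ, true_and, Set.mem_ofPred_eq] at hu hv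
  exact (h.adj_iff u v).1 huv (hu.trans hv.symm)

theorem chromaticNumber_induce_compl_part (h : MinCex V G k p L) (i : Fin k) :
    (G.induce (part p i : Set V)ᶜ).chromaticNumber = (k - 1 : ℕ) := by
  have hmem : ∀ v, v ∈ (part p i : Set V)ᶜ ↔ p v ≠ i := by simp [part]
  let q : ↥(part p i : Set V)ᶜ → {j : Fin k // j ≠ i} := fun v => ⟨p v, (hmem v).1 v.2⟩
  have hq : Surjective q := fun j =>
    ⟨⟨surjInv h.surj j, (hmem _).2 (by rw [surjInv_eq h.surj]; exact j.2)⟩,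
      Subtype.ext (surjInv_eq h.surj j)⟩
  rw [chromaticNumber_eq_card_of_adj_iff q hq fun u v => (h.adj_iff u v).trans (by simp [q]),
    Fintype.card_subtype_compl, Fintype.card_subtype_eq, Fintype.card_fin]

theorem choosable_induce_compl_part (h : MinCex V G k p L) (i : Fin k)
    (hi : 2 ≤ (part p i).card) : Choosable (G.induce (part p i : Set V)ᶜ) (k - 1) := by
  have hcard : Fintype.card ↥(part p i : Set V)ᶜ = Fintype.card V - (part p i).card := by
    simp only [Fintype.card_compl_set, Finset.coe_sort_coe, Fintype.card_coe]
  have hle : (part p i).card ≤ Fintype.card V := card_le_univ _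
  have := h.card_le
  rw [← h.minimal _ _ (k - 1) (by omega) (h.chromaticNumber_induce_compl_part i) (by omega)]
  exact choosable_listChromaticNumber _

end MinCex

/-- In a minimal counterexample, every part with at least two vertices has empty
intersection of its lists. -/
theorem stmt_3 (V : Type) [Fintype V] (G : SimpleGraph V) (k : ℕ) (p : V → Fin k)
    (L : V → Finset ℕ) (h : MinCex V G k p L) (i : Fin k) (hi : 2 ≤ (part p i).card) :
    ¬ ∃ c : ℕ, ∀ v, p v = i → c ∈ L v := by
  rintro ⟨c, hc⟩
  refine h.bad (ListColorable.of_induce_compl (h.isIndepSet_part i) (c := c) ?_ ?_)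
  · intro v hv
    exact hc v (by simpa [part] using hv)
  · refine h.choosable_induce_compl_part i hi _ fun v => ?_
    have := h.lists v
    have := pred_card_le_card_erase (s := L v) (a := c)
    omega
end

section
/- Let G be a minimal counterexample to Ohba's Conjecture with bad list assignment L and C = ⋃_v L(v). Then |C| < |V(G)| ≤ 2k+1. -/
open Finset
open scoped Classical

/-!
By Hall's theorem there is an injection `h : C → V` with `c ∈ L (h c)` unless some set `D` of
colours has a neighbourhood `U = N(D)` smaller than `D`; and once `h` exists, `|C| ≥ |V|` would
make it a bijection whose inverse is an `L`-colouring. Take `D` of maximal deficiency: then `U` can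
be matched into `D`, while no vertex outside `U` has a colour of `D` in its list, so it suffices to
`L`-colour the proper subset `V \ U`.

Every proper subset `S` of `V` is `L`-colourable. If `S` meets all `k` parts, minimality applies to
it directly. Otherwise, either Hall's condition gives `S` an injective colouring, or a Hall violator
has more than `k` vertices, hence two vertices of one part sharing a colour `c`; colouring both with
`c` leaves at most `k - 1` parts with lists of size `k - 1`, and after padding with singleton parts
this is a smaller instance of Ohba's conjecture.
-/

theorem Finset.exists_injective_of_hall {ι α : Type*} [DecidableEq α] (s : Finset ι)
    (t : ι → Finset α) (h : ∀ A ⊆ s, #A ≤ #(A.biUnion t)) :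
    ∃ f : s → α, Function.Injective f ∧ ∀ i : s, f i ∈ t i := by
  refine (all_card_le_biUnion_card_iff_exists_injective fun i : s => t i).1 fun A => ?_
  have := h (A.map (Function.Embedding.subtype _)) fun _ => property_of_mem_map_subtype A
  rwa [card_map, map_eq_image, image_biUnion] at this

lemma SimpleGraph.chromaticNumber_comap_top {W I : Type*} [Fintype I] {q : W → I}
    (hq : Function.Surjective q) :
    ((⊤ : SimpleGraph I).comap q).chromaticNumber = Fintype.card I := by
  rw [← chromaticNumber_top]
  refine le_antisymm (chromaticNumber_mono_of_hom ⟨q, id⟩) (chromaticNumber_mono_of_hom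
    ⟨Function.surjInv hq, fun {a b} hab => ?_⟩)
  simpa [Function.surjInv_eq hq] using hab

section ListColoring

variable {V : Type} {G : SimpleGraph V} {L L₁ L₂ : V → Finset ℕ} {S T : Finset V}

def ListColorableOn (G : SimpleGraph V) (L : V → Finset ℕ) (S : Finset V) : Prop :=
  ∃ f : V → ℕ, (∀ v ∈ S, f v ∈ L v) ∧ ∀ u ∈ S, ∀ w ∈ S, G.Adj u w → f u ≠ f w

lemma ListColorableOn.listColorable [Fintype V] (h : ListColorableOn G L univ) :
    ListColorable G L := by
  obtain ⟨f, hfL, hf⟩ := h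
  exact ⟨f, fun v => hfL v (mem_univ v), fun u w => hf u (mem_univ u) w (mem_univ w)⟩

lemma ListColorableOn.union (h₁ : ListColorableOn G L₁ S) (h₂ : ListColorableOn G L₂ T)
    (hL₁ : ∀ v ∈ S, L₁ v ⊆ L v) (hL₂ : ∀ v ∈ T, L₂ v ⊆ L v)
    (hdisj : ∀ u ∈ S, ∀ w ∈ T, Disjoint (L₁ u) (L₂ w)) : ListColorableOn G L (S ∪ T) := by
  obtain ⟨f, hfL, hf⟩ := h₁
  obtain ⟨g, hgL, hg⟩ := h₂
  have hT : ∀ v ∈ S ∪ T, v ∉ S → v ∈ T := fun v hv hvS => (mem_union.1 hv).resolve_left hvS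
  refine ⟨fun v => if v ∈ S then f v else g v, fun v hv => ?_, fun u hu w hw huw => ?_⟩ <;>
    dsimp only
  · split_ifs with hvS
    exacts [hL₁ v hvS (hfL v hvS), hL₂ v (hT v hv hvS) (hgL v (hT v hv hvS))]
  · split_ifs with huS hwS hwS
    · exact hf u huS w hwS huw
    · exact disjoint_left.1 (hdisj u huS w (hT w hw hwS)) (hfL u huS) ∘
        (· ▸ hgL w (hT w hw hwS))
    · exact fun he => disjoint_left.1 (hdisj w hwS u (hT u hu huS)) (hfL w hwS)
        (he ▸ hgL u (hT u hu huS))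
    · exact hg u (hT u hu huS) w (hT w hw hwS) huw

lemma listColorableOn_of_hall (G : SimpleGraph V) (h : ∀ A ⊆ S, #A ≤ #(A.biUnion L)) :
    ListColorableOn G L S := by
  obtain ⟨f, hinj, hf⟩ := S.exists_injective_of_hall L h
  refine ⟨fun v => if hv : v ∈ S then f ⟨v, hv⟩ else 0,
    fun v hv => by simpa [hv] using hf ⟨v, hv⟩, fun u hu w hw huw heq => huw.ne ?_⟩
  exact congrArg Subtype.val (hinj (by simpa [hu, hw] using heq))

lemma choosable_card_s5 [Fintype V] (G : SimpleGraph V) : Choosable G (Fintype.card V) := by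
  refine fun L hL => (listColorableOn_of_hall G fun A _ => ?_).listColorable
  obtain rfl | ⟨v, hv⟩ := A.eq_empty_or_nonempty
  · simp
  calc #A ≤ Fintype.card V := card_le_univ A
    _ ≤ #(L v) := hL v
    _ ≤ #(A.biUnion L) := card_le_card (subset_biUnion_of_mem L hv)

lemma choosable_of_listChromaticNumber_eq [Fintype V] {j : ℕ} (h : listChromaticNumber G = j) :
    Choosable G j :=
  h ▸ Nat.sInf_mem (s := {k | Choosable G k}) ⟨_, choosable_card_s5 G⟩

end ListColoring

section Deficiency

variable {V : Type} [Fintype V] (L : V → Finset ℕ)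

lemma mem_NB {c : ℕ} {v : V} : v ∈ NB L c ↔ c ∈ L v := by
  simp [NB]

lemma exists_deficient_colors_hall_on_neighbors {D₀ : Finset ℕ} (hD₀ : D₀ ⊆ colorSet L)
    (hdef : #(D₀.biUnion (NB L)) < #D₀) :
    ∃ D ⊆ colorSet L, #(D.biUnion (NB L)) < #D ∧
      ∀ A ⊆ D.biUnion (NB L), #A ≤ #(A.biUnion fun v => L v ∩ D) := by
  obtain ⟨D, hD, hmax⟩ := (colorSet L).powerset.exists_max_image
    (fun D => #D - #(D.biUnion (NB L))) ⟨∅, empty_mem_powerset _⟩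
  rw [mem_powerset] at hD
  have hD₀max := hmax D₀ (mem_powerset.2 hD₀)
  refine ⟨D, hD, by omega, fun A hA => ?_⟩
  by_contra! hAdef
  set T := A.biUnion fun v => L v ∩ D
  have hTD : T ⊆ D := biUnion_subset.2 fun _ _ => inter_subset_right
  -- Removing the colours seen by `A` increases the deficiency of `D`.
  have hN : (D \ T).biUnion (NB L) ⊆ D.biUnion (NB L) \ A := by
    intro v hv
    obtain ⟨c, hc, hcv⟩ := mem_biUnion.1 hv
    obtain ⟨hcD, hcT⟩ := mem_sdiff.1 hc
    rw [mem_NB] at hcv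
    refine mem_sdiff.2 ⟨mem_biUnion.2 ⟨c, hcD, (mem_NB L).2 hcv⟩, fun hvA => hcT ?_⟩
    exact mem_biUnion.2 ⟨v, hvA, mem_inter.2 ⟨hcv, hcD⟩⟩
  have h₁ := card_le_card hN
  rw [card_sdiff_of_subset hA] at h₁
  have h₂ := hmax (D \ T) (mem_powerset.2 (sdiff_subset.trans hD))
  rw [card_sdiff_of_subset hTD] at h₂
  have := card_le_card hA
  have := card_le_card hTD
  omega

end Deficiency

lemma exists_same_part_pair_with_common_color {V : Type} {k : ℕ} (p : V → Fin k)
    {L : V → Finset ℕ} (hL : ∀ v, k ≤ #(L v)) {A : Finset V} (hA : #(A.biUnion L) < #A)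
    (hAk : #A ≤ 2 * k) :
    ∃ u ∈ A, ∃ w ∈ A, u ≠ w ∧ p u = p w ∧ ∃ c, c ∈ L u ∧ c ∈ L w := by
  obtain ⟨v, hv⟩ := card_pos.1 (Nat.zero_lt_of_lt hA)
  have hkA : k < #A := (hL v).trans_lt ((card_le_card (subset_biUnion_of_mem L hv)).trans_lt hA)
  obtain ⟨u, hu, w, hw, huw, hp⟩ := exists_ne_map_eq_of_card_lt_of_maps_to
    (by simpa using hkA) fun v _ => mem_univ (p v)
  refine ⟨u, hu, w, hw, huw, hp, ?_⟩
  by_contra! hdisj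
  have hcard := card_union_of_disjoint (disjoint_left.2 hdisj)
  have := card_le_card (union_subset (subset_biUnion_of_mem L hu) (subset_biUnion_of_mem L hw))
  have := hL u
  have := hL w
  omega

namespace MinCex

variable {V : Type} [Fintype V] {G : SimpleGraph V} {k : ℕ} {p : V → Fin k}
  {L : V → Finset ℕ}

/-- Padding `S` with `j - #(S.image p)` new singleton parts gives a complete `j`-partite graph,
smaller than `G`, to which minimality applies. -/
lemma listColorableOn_of_card_le (h : MinCex V G k p L) {S : Finset V} {j : ℕ}
    {L' : V → Finset ℕ} (hL' : ∀ v ∈ S, j ≤ #(L' v)) (hj : #(S.image p) ≤ j)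
    (hlt : #S + (j - #(S.image p)) < Fintype.card V)
    (hle : #S + (j - #(S.image p)) ≤ 2 * j + 1) : ListColorableOn G L' S := by
  set m := j - #(S.image p)
  let q : S ⊕ Fin m → S.image p ⊕ Fin m :=
    Sum.map (fun v => ⟨p v, mem_image_of_mem p v.2⟩) id
  have hq : Function.Surjective q := by
    rintro (⟨i, hi⟩ | i)
    · obtain ⟨v, hv, rfl⟩ := mem_image.1 hi
      exact ⟨.inl ⟨v, hv⟩, rfl⟩
    · exact ⟨.inr i, rfl⟩
  let H := (⊤ : SimpleGraph _).comap q
  have hχ : H.chromaticNumber = j := by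
    rw [SimpleGraph.chromaticNumber_comap_top hq]
    simp only [Fintype.card_sum, Fintype.card_coe, Fintype.card_fin]
    norm_cast
    omega
  have hcard : Fintype.card (S ⊕ Fin m) = #S + m := by simp
  have hlists : ∀ x, j ≤ #(Sum.elim (fun v : S => L' v) (fun _ : Fin m => range j) x) := by
    rintro (v | i)
    exacts [hL' v v.2, by simp]
  obtain ⟨f, hfL, hf⟩ := choosable_of_listChromaticNumber_eq
    (h.minimal _ H j (hcard ▸ hlt) hχ (hcard ▸ hle)) _ hlists
  refine ⟨fun v => if hv : v ∈ S then f (.inl ⟨v, hv⟩) else 0,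
    fun v hv => by simpa [hv] using hfL (.inl ⟨v, hv⟩), fun u hu w hw huw => ?_⟩
  simp only [dif_pos hu, dif_pos hw]
  exact hf (by simpa [H, q] using (h.adj_iff u w).1 huw)

lemma le_card_image_add_card_compl (h : MinCex V G k p L) (S : Finset V) :
    k ≤ #(S.image p) + #Sᶜ :=
  calc k = #((S ∪ Sᶜ).image p) := by
        rw [union_compl, image_univ_of_surjective h.surj, card_univ, Fintype.card_fin]
    _ ≤ #(S.image p) + #(Sᶜ.image p) := by rw [image_union]; exact card_union_le _ _
    _ ≤ #(S.image p) + #Sᶜ := by gcongr; exact card_image_le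

/-- Give `u` and `w` the common colour `c`: the rest of `S` has at most `k - 1` parts and lists
`L v \ {c}` of size at least `k - 1`, so minimality applies to it. -/
lemma listColorableOn_of_pair (h : MinCex V G k p L) {S : Finset V} {u w : V} (hu : u ∈ S)
    (hw : w ∈ S) (huw : u ≠ w) (hp : p u = p w) {c : ℕ} (hcu : c ∈ L u) (hcw : c ∈ L w)
    (hSk : #(S.image p) < k) (hS : #S + (k - #(S.image p)) ≤ Fintype.card V) :
    ListColorableOn G L S := by
  have huwS : {u, w} ⊆ S := insert_subset hu (singleton_subset_iff.2 hw)
  set T := S \ {u, w}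
  have hT : #T = #S - 2 := by rw [card_sdiff_of_subset huwS, card_pair huw]
  have hTS : #(T.image p) ≤ #(S.image p) := card_le_card (image_subset_image sdiff_subset)
  have hST : #(S.image p) ≤ #(T.image p) + 1 := by
    refine (card_le_card fun i hi => ?_).trans (card_insert_le (p u) _)
    obtain ⟨v, hv, rfl⟩ := mem_image.1 hi
    by_cases hvuw : v ∈ ({u, w} : Finset V)
    · rcases mem_insert.1 hvuw with rfl | hvw
      · exact mem_insert_self _ _
      · rw [mem_singleton.1 hvw, ← hp]; exact mem_insert_self _ _
    · exact mem_insert_of_mem (mem_image_of_mem p (mem_sdiff.2 ⟨hv, hvuw⟩))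
  have hSS := card_le_card huwS
  have hn := h.card_le
  rw [card_pair huw] at hSS
  have hcolT : ListColorableOn G (fun v => (L v).erase c) T :=
    h.listColorableOn_of_card_le (j := k - 1)
      (fun v _ => (Nat.sub_le_sub_right (h.lists v) 1).trans pred_card_le_card_erase)
      (by omega) (by omega) (by omega)
  have hcoluw : ListColorableOn G (fun _ => {c}) {u, w} := by
    refine ⟨fun _ => c, fun _ _ => mem_singleton_self c, fun x hx y hy hxy => ?_⟩
    rw [h.adj_iff] at hxy
    simp only [mem_insert, mem_singleton] at hx hy
    rcases hx with rfl | rfl <;> rcases hy with rfl | rfl <;> simp_all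
  have hc : ∀ v ∈ ({u, w} : Finset V), c ∈ L v := by simp [hcu, hcw]
  have := hcoluw.union hcolT (fun v hv => singleton_subset_iff.2 (hc v hv))
    (fun _ _ => erase_subset _ _) fun _ _ _ _ => disjoint_singleton_left.2 (notMem_erase c _)
  rwa [union_sdiff_of_subset huwS] at this

lemma listColorableOn_of_compl_nonempty (h : MinCex V G k p L) {S : Finset V}
    (hS : Sᶜ.Nonempty) : ListColorableOn G L S := by
  have hk := h.le_card_image_add_card_compl S
  have hn := card_add_card_compl S
  have := h.card_le
  have := hS.card_pos
  have hSk : #(S.image p) ≤ k := (card_le_univ _).trans_eq (Fintype.card_fin k)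
  by_cases hfull : #(S.image p) = k
  · exact h.listColorableOn_of_card_le (fun v _ => h.lists v) hSk (by omega) (by omega)
  replace hSk := lt_of_le_of_ne hSk hfull
  by_cases hall : ∀ A ⊆ S, #A ≤ #(A.biUnion L)
  · exact listColorableOn_of_hall G hall
  push Not at hall
  obtain ⟨A, hAS, hA⟩ := hall
  obtain ⟨u, hu, w, hw, huw, hp, c, hcu, hcw⟩ :=
    exists_same_part_pair_with_common_color p h.lists hA (by have := card_le_card hAS; omega)
  exact h.listColorableOn_of_pair (hAS hu) (hAS hw) huw hp hcu hcw hSk (by omega)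

theorem exists_injective_colorSet (h : MinCex V G k p L) :
    ∃ f : colorSet L → V, Function.Injective f ∧ ∀ c, c.1 ∈ L (f c) := by
  suffices hHall : ∀ D ⊆ colorSet L, #D ≤ #(D.biUnion (NB L)) by
    obtain ⟨f, hf, hfL⟩ := (colorSet L).exists_injective_of_hall (NB L) hHall
    exact ⟨f, hf, fun c => (mem_NB L).1 (hfL c)⟩
  by_contra! ⟨D₀, hD₀, hdef⟩
  obtain ⟨D, hD, hdefD, hall⟩ := exists_deficient_colors_hall_on_neighbors L hD₀ hdef
  set U := D.biUnion (NB L)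
  have hU : U.Nonempty := by
    obtain ⟨c, hc⟩ := card_pos.1 (Nat.zero_lt_of_lt hdefD)
    obtain ⟨v, -, hv⟩ := mem_biUnion.1 (hD hc)
    exact ⟨v, mem_biUnion.2 ⟨c, hc, (mem_NB L).2 hv⟩⟩
  apply h.bad
  have := (listColorableOn_of_hall G hall).union
    (h.listColorableOn_of_compl_nonempty (by rwa [compl_compl]))
    (fun _ _ => inter_subset_left) (fun _ _ => subset_rfl) fun u hu w hw => ?_
  · rw [union_compl] at this
    exact this.listColorable
  exact disjoint_left.2 fun c hc hcw =>
    mem_compl.1 hw (mem_biUnion.2 ⟨c, (mem_inter.1 hc).2, (mem_NB L).2 hcw⟩)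

end MinCex

/-- In a minimal counterexample, `|C| < |V(G)| ≤ 2k+1`. -/
theorem stmt_5 (V : Type) [Fintype V] (G : SimpleGraph V) (k : ℕ) (p : V → Fin k)
    (L : V → Finset ℕ) (h : MinCex V G k p L) :
    (colorSet L).card < Fintype.card V ∧ Fintype.card V ≤ 2 * k + 1 := by
  refine ⟨?_, h.card_le⟩
  by_contra! hcard
  obtain ⟨f, hf, hfL⟩ := h.exists_injective_colorSet
  have hbij : Function.Bijective f := (Fintype.bijective_iff_injective_and_card f).2
    ⟨hf, (Fintype.card_le_of_injective f hf).antisymm (by simpa using hcard)⟩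
  let e := Equiv.ofBijective f hbij
  refine h.bad ⟨fun v => e.symm v, fun v => ?_, fun u w huw heq => huw.ne ?_⟩
  · simpa [e, Equiv.ofBijective_apply_symm_apply] using hfL (e.symm v)
  · exact e.symm.injective (Subtype.ext heq)
end

section
/- Let G be a graph with colour set C admitting an injection h: C → V(G) with c ∈ L(h(c)) for all c ∈ C, and let f: V(G) → C be a proper colouring. Then there exists a proper surjective colouring g: V(G) → C such that every vertex v satisfies either g(v) ∈ L(v) or g⁻¹(g(v)) ⊆ f⁻¹(f(v)). -/
open Finset
open scoped Classical

/-!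
Start from `g = f` and, while some colour `c ∈ C` is unused, recolour the vertex `m c` with `c`.
Throughout, every vertex either keeps its `f`-colour or is the only vertex of its colour, which
lies in its list; since `c` was unused, properness survives each step. Because `m` is injective
on `C`, the set of colours `c` with `g (m c) = c` strictly grows, so the process stops, and it
stops only when `g` is onto `C`.
-/

def fixedColors {V α : Type} [DecidableEq α] (s : Finset α) (m : α → V) (g : V → α) : Finset α :=
  s.filter fun c => g (m c) = c

theorem fixedColors_ssubset_update {V α : Type} [DecidableEq α] {s : Finset α} {m : α → V}
    (hinj : Set.InjOn m s) {g : V → α} {c : α} (hc : c ∈ s) (hunused : ∀ u, g u ≠ c) :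
    fixedColors s m g ⊂ fixedColors s m (Function.update g (m c) c) := by
  refine ssubset_iff.mpr ⟨c, fun h => hunused _ (mem_filter.mp h).2, ?_⟩
  intro d hd
  rcases mem_insert.mp hd with rfl | hd
  · exact mem_filter.mpr ⟨hc, by simp⟩
  obtain ⟨hds, hfix⟩ := mem_filter.mp hd
  have hne : m d ≠ m c := fun h => hunused _ (hfix.trans (hinj hds hc h))
  exact mem_filter.mpr ⟨hds, by rwa [Function.update_of_ne hne]⟩

section Redirect

variable {V : Type} [Fintype V]

/-- The invariant of the recolouring process started at `f`. -/
structure IsRedirection (G : SimpleGraph V) (L : V → Finset ℕ) (f g : V → ℕ) : Prop where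
  mem_colorSet : ∀ v, g v ∈ colorSet L
  adj_ne : ∀ ⦃u w : V⦄, G.Adj u w → g u ≠ g w
  unique_listed_or_eq : ∀ v, (g v ∈ L v ∧ ∀ u, g u = g v → u = v) ∨ g v = f v

namespace IsRedirection

variable {G : SimpleGraph V} {L : V → Finset ℕ} {f g : V → ℕ}

theorem refl (hfC : ∀ v, f v ∈ colorSet L) (hfprop : ∀ ⦃u w : V⦄, G.Adj u w → f u ≠ f w) :
    IsRedirection G L f f :=
  ⟨hfC, hfprop, fun _ => Or.inr rfl⟩

theorem update (hg : IsRedirection G L f g) {v : V} {c : ℕ} (hcC : c ∈ colorSet L)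
    (hcv : c ∈ L v) (hunused : ∀ u, g u ≠ c) :
    IsRedirection G L f (Function.update g v c) := by
  have only_v_has_c : ∀ u, Function.update g v c u = c → u = v := by
    intro u hu
    by_contra hne
    exact hunused u (by rwa [Function.update_of_ne hne] at hu)
  refine ⟨fun u => ?_, fun u w hadj => ?_, fun u => ?_⟩
  · rcases eq_or_ne u v with rfl | hu
    · simpa using hcC
    · simpa [hu] using hg.mem_colorSet u
  · rcases eq_or_ne u v with rfl | hu
    · simpa [(G.ne_of_adj hadj).symm] using (hunused w).symm
    rcases eq_or_ne w v with rfl | hw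
    · simpa [hu] using hunused u
    simpa [hu, hw] using hg.adj_ne hadj
  · rcases eq_or_ne u v with rfl | hu
    · exact Or.inl ⟨by simpa using hcv, fun w hw => only_v_has_c w (by simpa using hw)⟩
    rw [Function.update_of_ne hu]
    refine (hg.unique_listed_or_eq u).imp (fun ⟨hmem, huniq⟩ => ⟨hmem, fun w hw => ?_⟩) id
    rcases eq_or_ne w v with rfl | hwv
    · exact (hunused u (by simpa using hw.symm)).elim
    · exact huniq w (by rwa [Function.update_of_ne hwv] at hw)

theorem listed_or_fiber_subset (hg : IsRedirection G L f g) (v : V) :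
    g v ∈ L v ∨ ∀ u, g u = g v → f u = f v := by
  refine (hg.unique_listed_or_eq v).imp And.left fun hv u hu => ?_
  rcases hg.unique_listed_or_eq u with ⟨-, huniq⟩ | hu'
  · rw [huniq v hu.symm]
  · rw [← hu', hu, hv]

theorem exists_surjective {m : ℕ → V}
    (hinj : Set.InjOn m ↑(colorSet L)) (hmem : ∀ c ∈ colorSet L, c ∈ L (m c))
    (hg : IsRedirection G L f g) :
    ∃ g' : V → ℕ, IsRedirection G L f g' ∧ ∀ c ∈ colorSet L, ∃ v, g' v = c := by
  induction hn : #(colorSet L) - #(fixedColors (colorSet L) m g) using Nat.strong_induction_on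
    generalizing g with
  | _ n ih =>
    by_cases hsurj : ∀ c ∈ colorSet L, ∃ v, g v = c
    · exact ⟨g, hg, hsurj⟩
    push Not at hsurj
    obtain ⟨c, hcC, hunused⟩ := hsurj
    have hlt := card_lt_card (fixedColors_ssubset_update hinj hcC hunused)
    have hle : #(fixedColors (colorSet L) m (Function.update g (m c) c)) ≤ #(colorSet L) :=
      card_filter_le _ _
    exact ih _ (by omega) (hg.update hcC (hmem c hcC) hunused) rfl

end IsRedirection

end Redirect

/-- Given an injection `h : C → V(G)` with `c ∈ L(h c)` and a proper colouring
`f : V(G) → C`, there is a proper surjective colouring `g : V(G) → C` such that every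
vertex `v` satisfies `g v ∈ L v` or `g⁻¹(g v) ⊆ f⁻¹(f v)`. -/
theorem stmt_8 (V : Type) [Fintype V] (G : SimpleGraph V) (L : V → Finset ℕ)
    (m : ℕ → V) (hinj : Set.InjOn m ↑(colorSet L)) (hmem : ∀ c ∈ colorSet L, c ∈ L (m c))
    (f : V → ℕ) (hfC : ∀ v, f v ∈ colorSet L)
    (hfprop : ∀ ⦃u w : V⦄, G.Adj u w → f u ≠ f w) :
    ∃ g : V → ℕ, (∀ v, g v ∈ colorSet L) ∧ (∀ c ∈ colorSet L, ∃ v, g v = c) ∧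
      (∀ ⦃u w : V⦄, G.Adj u w → g u ≠ g w) ∧
      ∀ v, g v ∈ L v ∨ (∀ u, g u = g v → f u = f v) := by
  obtain ⟨g, hg, hsurj⟩ := (IsRedirection.refl hfC hfprop).exists_surjective hinj hmem
  exact ⟨g, hg.mem_colorSet, hsurj, hg.adj_ne, hg.listed_or_fiber_subset⟩
end
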